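/- Suppose the underlying graph Γ of an E-GCM graph (Γ,M) is a loop on n ≥ 3 nodes (the nodes can be numbered γ_1,…,γ_n so that each γ_i is adjacent precisely to γ_{i−1} and γ_{i+1}, indices taken mod n), and that M_{ij}M_{ji} = 1 for every edge of Γ. Then (Γ,M) is not admissible. -/

import Mathlib

/-- An E-generalized Cartan matrix (E-GCM) on a finite index type `ι`. -/
structure EGCM (ι : Type*) [Fintype ι] where
  /-- the matrix of amplitudes -/
  M : ι → ι → ℝ
  diag : ∀ i, M i i = 2
  offDiag_nonpos : ∀ i j, i ≠ j → M i j ≤ 0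
  zero_iff : ∀ i j, M i j = 0 ↔ M j i = 0
  prod_cond : ∀ i j, i ≠ j → M i j * M j i ≠ 0 →
    4 ≤ M i j * M j i ∨
      ∃ k : ℕ, 3 ≤ k ∧ M i j * M j i = 4 * Real.cos (Real.pi / k) ^ 2

namespace EGCM

variable {ι : Type*} [Fintype ι]

/-- Adjacency in the E-GCM graph. -/
def Adj (E : EGCM ι) (i j : ι) : Prop := i ≠ j ∧ E.M i j ≠ 0

/-- The underlying simple graph of an E-GCM graph. -/
def graph (E : EGCM ι) : SimpleGraph ι where
  Adj i j := i ≠ j ∧ E.M i j ≠ 0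
  symm := by
    refine ⟨?_⟩
    intro i j ⟨h1, h2⟩
    exact ⟨h1.symm, fun hz => h2 ((E.zero_iff j i).mp hz)⟩
  loopless := by refine ⟨?_⟩; intro i ⟨h, _⟩; exact h rfl

/-- The result of firing node `i` from position `lam`. -/
def fire (E : EGCM ι) (lam : ι → ℝ) (i : ι) : ι → ℝ := fun j => lam j - E.M i j * lam i

/-- The position resulting from firing the nodes in the list `s` in order. -/
def fireList (E : EGCM ι) (lam : ι → ℝ) : List ι → (ι → ℝ)
  | [] => lam
  | i :: s => fireList E (E.fire lam i) s

/-- The firing sequence `s` is legal from position `lam`: at each step the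
fired node carries a positive number. -/
def Legal (E : EGCM ι) (lam : ι → ℝ) : List ι → Prop
  | [] => True
  | i :: s => 0 < lam i ∧ Legal E (E.fire lam i) s

/-- A position with no positive entries. -/
def Terminal (lam : ι → ℝ) : Prop := ∀ i, lam i ≤ 0

/-- `s` is a (convergent) game sequence from `lam`: a legal firing sequence whose
resulting position has no positive entries. -/
def IsGameSeq (E : EGCM ι) (lam : ι → ℝ) (s : List ι) : Prop :=
  E.Legal lam s ∧ Terminal (E.fireList lam s)

/-- The position after `k` steps of the infinite firing sequence `f`. -/
def posAt (E : EGCM ι) (lam : ι → ℝ) (f : ℕ → ι) : ℕ → (ι → ℝ)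
  | 0 => lam
  | k + 1 => E.fire (posAt E lam f k) (f k)

/-- `f` is a divergent game sequence from `lam`: an infinite sequence of legal firings. -/
def DivergentSeq (E : EGCM ι) (lam : ι → ℝ) (f : ℕ → ι) : Prop :=
  ∀ k, 0 < E.posAt lam f k (f k)

/-- A dominant position: all numbers nonnegative. -/
def Dominant (lam : ι → ℝ) : Prop := ∀ i, 0 ≤ lam i

/-- A strongly dominant position: all numbers positive. -/
def StronglyDominant (lam : ι → ℝ) : Prop := ∀ i, 0 < lam i

/-- The E-GCM graph is admissible if some nonzero dominant position has a
convergent game sequence. -/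
def Admissible (E : EGCM ι) : Prop :=
  ∃ lam : ι → ℝ, Dominant lam ∧ lam ≠ 0 ∧ ∃ s : List ι, E.IsGameSeq lam s

/-- The E-GCM graph is strongly admissible if every nonzero dominant position has a
convergent game sequence. -/
def StronglyAdmissible (E : EGCM ι) : Prop :=
  ∀ lam : ι → ℝ, Dominant lam → lam ≠ 0 → ∃ s : List ι, E.IsGameSeq lam s

/-- A position is adjacency-free if no position reachable from it by a legal firing
sequence (i.e. no intermediate position of a game sequence) has positive numbers at
two adjacent nodes. -/
def AdjacencyFree (E : EGCM ι) (lam : ι → ℝ) : Prop :=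
  ∀ s : List ι, E.Legal lam s →
    ¬ ∃ i j, E.Adj i j ∧ 0 < E.fireList lam s i ∧ 0 < E.fireList lam s j

/-- A `J`-complement-dominant position: zero exactly at the nodes of `J`, positive elsewhere. -/
def JcDominant (J : Set ι) (lam : ι → ℝ) : Prop :=
  (∀ j ∈ J, lam j = 0) ∧ ∀ i ∉ J, 0 < lam i

open Classical in
/-- The Coxeter exponent `m i j` attached to the E-GCM: `m i j = k` if
`M i j * M j i = 4 cos²(π/k)` with `k ≥ 2`, and `m i j = 0` (representing `∞`)
if `M i j * M j i ≥ 4`. -/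
noncomputable def m (E : EGCM ι) (i j : ι) : ℕ :=
  if i = j then 1
  else if h : ∃ k : ℕ, 2 ≤ k ∧ E.M i j * E.M j i = 4 * Real.cos (Real.pi / k) ^ 2
    then Nat.find h else 0

theorem m_symm (E : EGCM ι) (i j : ι) : E.m i j = E.m j i := by
  unfold m
  rcases eq_or_ne i j with rfl | hij
  · simp
  · rw [if_neg hij, if_neg (Ne.symm hij)]
    by_cases h : ∃ k : ℕ, 2 ≤ k ∧ E.M i j * E.M j i = 4 * Real.cos (Real.pi / k) ^ 2
    · have h' : ∃ k : ℕ, 2 ≤ k ∧ E.M j i * E.M i j = 4 * Real.cos (Real.pi / k) ^ 2 := by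
        rw [mul_comm]; exact h
      rw [dif_pos h, dif_pos h']
      exact le_antisymm (Nat.find_mono fun n hn => by rwa [mul_comm (E.M i j)])
        (Nat.find_mono fun n hn => by rwa [mul_comm (E.M j i)])
    · have h' : ¬ ∃ k : ℕ, 2 ≤ k ∧ E.M j i * E.M i j = 4 * Real.cos (Real.pi / k) ^ 2 := by
        rw [mul_comm]; exact h
      rw [dif_neg h, dif_neg h']

theorem m_offDiag (E : EGCM ι) (i j : ι) (h : i ≠ j) : E.m i j ≠ 1 := by
  classical
  unfold m
  rw [if_neg h]
  split
  · rename_i hex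
    have := Nat.find_spec hex
    omega
  · omega

/-- The Coxeter matrix associated to the E-GCM. -/
noncomputable def cox (E : EGCM ι) : CoxeterMatrix ι where
  M := fun i j => E.m i j
  isSymm := by
    ext i j
    exact E.m_symm j i
  diagonal := by intro i; simp [m]
  off_diagonal := fun i j h => E.m_offDiag i j h

/-- The reflection `S i` of the geometric representation:
`S i v = v − 2 B(α i, v) • α i` where `B (α i, α j) = M i j / 2`. -/
noncomputable def S [DecidableEq ι] (E : EGCM ι) (i : ι) : Module.End ℝ (ι → ℝ) :=
  LinearMap.id -
    LinearMap.smulRight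
      ((∑ k, E.M i k • LinearMap.proj k : (ι → ℝ) →ₗ[ℝ] ℝ)) (Pi.single i 1)

end EGCM

section Roots

variable {ι : Type*} [Fintype ι] [DecidableEq ι]
variable {W : Type*} [Group W]

/-- `α` is a root for the geometric representation `σ`. -/
def IsRoot (σ : W →* Module.End ℝ (ι → ℝ)) (α : ι → ℝ) : Prop :=
  ∃ (w : W) (i : ι), σ w (Pi.single i 1) = α

/-- `α` is a positive root. -/
def IsPosRoot (σ : W →* Module.End ℝ (ι → ℝ)) (α : ι → ℝ) : Prop :=
  IsRoot σ α ∧ ∀ i, 0 ≤ α i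

/-- `α` is a negative root. -/
def IsNegRoot (σ : W →* Module.End ℝ (ι → ℝ)) (α : ι → ℝ) : Prop :=
  IsRoot σ α ∧ ∀ i, α i ≤ 0

/-- `N_M(w)`: the set of positive roots sent to negative roots by `w`. -/
def NM (σ : W →* Module.End ℝ (ι → ℝ)) (w : W) : Set (ι → ℝ) :=
  {α | IsPosRoot σ α ∧ IsNegRoot σ (σ w α)}

/-- `𝔖_M(α)`: the positive roots which are real multiples of `α`. -/
def Sfrak (σ : W →* Module.End ℝ (ι → ℝ)) (α : ι → ℝ) : Set (ι → ℝ) :=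
  {β | (∃ K : ℝ, β = K • α) ∧ IsPosRoot σ β}

end Roots

section Parabolic

variable {ι : Type*} {W : Type*} [Group W]

/-- The standard parabolic subgroup `W_J`. -/
def parabolic {M : CoxeterMatrix ι} (cs : CoxeterSystem M W) (J : Set ι) : Subgroup W :=
  Subgroup.closure (cs.simple '' J)

/-- The set `W^J` of minimal coset representatives. -/
def minReps {M : CoxeterMatrix ι} (cs : CoxeterSystem M W) (J : Set ι) : Set W :=
  {w | ∀ j ∈ J, cs.length w < cs.length (w * cs.simple j)}

end Parabolic

namespace EGCM

variable {ι : Type*} [Fintype ι]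

/-- The E-GCM subgraph induced on a subset `I` of the nodes. -/
def restrict (E : EGCM ι) (I : Finset ι) : EGCM {x // x ∈ I} where
  M i j := E.M i j
  diag i := E.diag i
  offDiag_nonpos i j h := E.offDiag_nonpos i j (fun hc => h (Subtype.ext hc))
  zero_iff i j := E.zero_iff i j
  prod_cond i j h := E.prod_cond i j (fun hc => h (Subtype.ext hc))

/-- Adjacent nodes `i`, `j` are odd-neighborly if `m i j` is odd. -/
def OddNeighborly (E : EGCM ι) (i j : ι) : Prop := E.Adj i j ∧ Odd (E.m i j)

/-- The factor `K_{j i} = −(M j i) / (2 cos (π / m i j))` attached to an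
odd-neighborly pair `(i, j)`. -/
noncomputable def Kfac (E : EGCM ι) (i j : ι) : ℝ :=
  -E.M j i / (2 * Real.cos (Real.pi / (E.m i j : ℝ)))

/-- `Π_P` for the ON-path `P` given by a list of nodes: the product of the factors
`K` along consecutive pairs. -/
noncomputable def piON (E : EGCM ι) : List ι → ℝ
  | [] => 1
  | [_] => 1
  | a :: b :: t => piON E (b :: t) * E.Kfac a b

/-- `y` can be reached from `x` by a path of odd neighbors. -/
def ONReach (E : EGCM ι) (x y : ι) : Prop :=
  ∃ l : List ι, l.Chain' E.OddNeighborly ∧ l.head? = some x ∧ l.getLast? = some y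

/-- The ON-connected component containing `x` is unital ON-cyclic: every ON-cycle
whose nodes lie in this component has `Π = 1`. -/
def UnitalONCyclicAt (E : EGCM ι) (x : ι) : Prop :=
  ∀ l : List ι, l ≠ [] → l.Chain' E.OddNeighborly → (∀ y ∈ l, E.ONReach x y) →
    l.head? = l.getLast? → E.piON l = 1

/-- The E-GCM graph has an odd asymmetry: an odd-neighborly pair `i`, `j` with
`M i j ≠ M j i`. -/
def HasOddAsymmetry (E : EGCM ι) : Prop :=
  ∃ i j, E.OddNeighborly i j ∧ E.M i j ≠ E.M j i

end EGCM

section FullComm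

variable {ι : Type*} [Fintype ι] {W : Type*} [Group W]

/-- An elementary simplification of commuting type: interchange adjacent letters
`x`, `y` with `m x y = 2`. -/
def CommMove (E : EGCM ι) (l l' : List ι) : Prop :=
  ∃ (u v : List ι) (x y : ι), E.m x y = 2 ∧ l = u ++ x :: y :: v ∧ l' = u ++ y :: x :: v

/-- `w` is fully commutative: any reduced word for `w` can be obtained from any other
by a sequence of elementary simplifications of commuting type. -/
def FullyCommutative (E : EGCM ι) {W : Type*} [Group W] (cs : CoxeterSystem E.cox W)
    (w : W) : Prop :=
  ∀ l l' : List ι,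
    cs.IsReduced l.reverse → cs.wordProd l.reverse = w →
    cs.IsReduced l'.reverse → cs.wordProd l'.reverse = w →
    Relation.ReflTransGen (CommMove E) l l'

end FullComm

/-- The Coxeter graph of a Coxeter matrix: an edge between `i ≠ j` iff `m i j ≠ 2`. -/
def coxGraph {ι : Type*} (cm : CoxeterMatrix ι) : SimpleGraph ι where
  Adj i j := i ≠ j ∧ cm i j ≠ 2
  symm := by
    refine ⟨?_⟩
    intro i j ⟨h1, h2⟩
    exact ⟨h1.symm, by rwa [cm.symmetric j i]⟩
  loopless := by refine ⟨?_⟩; intro i ⟨h, _⟩; exact h rfl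

/-- The E-GCM `E` has associated exponents given by the Coxeter matrix `cm`:
`M i j * M j i = 4 cos² (π / cm i j)` when `cm i j ≠ 0` and `M i j * M j i ≥ 4`
when `cm i j = 0` (representing `∞`), with `M i j = 0` iff `cm i j = 2`. -/
def Compat {ι : Type*} [Fintype ι] (E : EGCM ι) (cm : CoxeterMatrix ι) : Prop :=
  ∀ i j : ι, i ≠ j →
    (E.M i j = 0 ↔ cm i j = 2) ∧
    ((cm i j = 0 ∧ 4 ≤ E.M i j * E.M j i) ∨
      (cm i j ≠ 0 ∧ E.M i j * E.M j i = 4 * Real.cos (Real.pi / (cm i j : ℝ)) ^ 2))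


/-!
Firing node `i` at a position `λ` changes the weight `∑ j, c j * λ j` by
`-(∑ j, M i j * c j) * λ i`. So if some `c > 0` satisfies `∑ j, M i j * c j ≤ 0` for every
`i`, the weight never decreases along a legal sequence; it is positive at a nonzero dominant
position and nonpositive at a terminal one, hence no such position has a convergent game
sequence. On the loop, with `u i = -M i (i + 1)` and `s` the geometric mean of the `u i`,
the vector with `u i * c (i + 1) = s * c i` closes up around the loop and, because
`M i (i + 1) * M (i + 1) i = 1`, gives `s * ∑ j, M i j * c j = -(s - 1) ^ 2 * c i`.
-/

theorem Fin.partialProd_last {M : Type*} [Monoid M] {k : ℕ} (f : Fin k → M) :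
    Fin.partialProd f (Fin.last k) = (List.ofFn f).prod := by
  simp [Fin.partialProd, List.take_of_length_le]

theorem Fin.partialProd_init_add_one {M : Type*} [CommMonoid M] {k : ℕ} (r : Fin (k + 1) → M)
    (hr : ∏ i, r i = 1) (i : Fin (k + 1)) :
    Fin.partialProd (Fin.init r) (i + 1) = Fin.partialProd (Fin.init r) i * r i := by
  induction i using Fin.lastCases with
  | last =>
    rw [Fin.last_add_one, Fin.partialProd_zero, Fin.partialProd_last, List.prod_ofFn,
      ← hr, Fin.prod_univ_castSucc]
    rfl
  | cast j => rw [Fin.coeSucc_eq_succ, Fin.partialProd_succ]; rfl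

theorem Fin.partialProd_pos {k : ℕ} {f : Fin k → ℝ} (hf : ∀ i, 0 < f i) (i : Fin (k + 1)) :
    0 < Fin.partialProd f i :=
  List.prod_pos fun _ hx => by
    obtain ⟨j, rfl⟩ := List.mem_ofFn.mp (List.mem_of_mem_take hx)
    exact hf j

theorem exists_pos_mul_add_one_eq_mul {k : ℕ} (u : Fin (k + 1) → ℝ) (hu : ∀ i, 0 < u i) :
    ∃ s > 0, ∃ c : Fin (k + 1) → ℝ, (∀ i, 0 < c i) ∧ ∀ i, u i * c (i + 1) = s * c i := by
  have hP : 0 < ∏ i, u i := Finset.prod_pos fun i _ => hu i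
  set s := (∏ i, u i) ^ ((k + 1 : ℕ)⁻¹ : ℝ)
  have hs : 0 < s := Real.rpow_pos_of_pos hP _
  have hsP : s ^ (k + 1) = ∏ i, u i := Real.rpow_inv_natCast_pow hP.le k.succ_ne_zero
  set r : Fin (k + 1) → ℝ := fun i => s / u i
  have hr : ∏ i, r i = 1 := by
    rw [Finset.prod_div_distrib, Finset.prod_const, Finset.card_univ, Fintype.card_fin, hsP,
      div_self hP.ne']
  refine ⟨s, hs, Fin.partialProd (Fin.init r), Fin.partialProd_pos fun i => ?_, fun i => ?_⟩
  · exact div_pos hs (hu _)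
  · rw [Fin.partialProd_init_add_one r hr]
    simp only [r]
    field_simp [(hu i).ne']

theorem Fintype.sum_eq_add_add {ι M : Type*} [Fintype ι] [AddCommMonoid M] {f : ι → M}
    (a b c : ι) (hab : a ≠ b) (hac : a ≠ c) (hbc : b ≠ c)
    (h : ∀ x, x ≠ a → x ≠ b → x ≠ c → f x = 0) : ∑ x, f x = f a + f b + f c := by
  classical
  rw [← Finset.sum_subset (Finset.subset_univ {a, b, c}) fun x _ hx => by
    simp only [Finset.mem_insert, Finset.mem_singleton, not_or] at hx
    exact h x hx.1 hx.2.1 hx.2.2]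
  rw [Finset.sum_insert (by simp [hab, hac]), Finset.sum_pair hbc, add_assoc]

theorem Fin.sub_one_ne_add_one {k : ℕ} (i : Fin (k + 3)) : i - 1 ≠ i + 1 := by
  rw [Ne, sub_eq_iff_eq_add, add_assoc, left_eq_add, Fin.ext_iff, Fin.val_add, Fin.val_one,
    Nat.mod_eq_of_lt (by omega)]
  simp

namespace EGCM

section

variable {ι : Type*} [Fintype ι] (E : EGCM ι) (c : ι → ℝ)

theorem sum_mul_fire (lam : ι → ℝ) (i : ι) :
    ∑ j, c j * E.fire lam i j = ∑ j, c j * lam j - (∑ j, E.M i j * c j) * lam i := by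
  simp only [fire, mul_sub, Finset.sum_sub_distrib, Finset.sum_mul]
  congr 1
  exact Finset.sum_congr rfl fun j _ => by ring

theorem sum_mul_le_sum_mul_fireList (hc : ∀ i, ∑ j, E.M i j * c j ≤ 0) :
    ∀ (lam : ι → ℝ) (s : List ι), E.Legal lam s →
      ∑ j, c j * lam j ≤ ∑ j, c j * E.fireList lam s j
  | _, [], _ => le_rfl
  | lam, i :: s, ⟨hi, hs⟩ => by
    refine le_trans ?_ (sum_mul_le_sum_mul_fireList hc (E.fire lam i) s hs)
    rw [sum_mul_fire]
    linarith [mul_nonpos_of_nonpos_of_nonneg (hc i) hi.le]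

theorem not_admissible_of_pos_of_sum_mul_nonpos (hc_pos : ∀ i, 0 < c i)
    (hc : ∀ i, ∑ j, E.M i j * c j ≤ 0) : ¬ E.Admissible := by
  rintro ⟨lam, hdom, hne, s, hlegal, hterm⟩
  have hstart : 0 < ∑ j, c j * lam j := by
    obtain ⟨k, hk⟩ := Function.ne_iff.mp hne
    exact Finset.sum_pos' (fun j _ => mul_nonneg (hc_pos j).le (hdom j))
      ⟨k, Finset.mem_univ k, mul_pos (hc_pos k) ((hdom k).lt_of_ne' hk)⟩
  have hend : ∑ j, c j * E.fireList lam s j ≤ 0 :=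
    Finset.sum_nonpos fun j _ => mul_nonpos_of_nonneg_of_nonpos (hc_pos j).le (hterm j)
  linarith [E.sum_mul_le_sum_mul_fireList c hc lam s hlegal]

end

theorem sum_mul_eq_of_adj_iff {k : ℕ} (E : EGCM (Fin (k + 3)))
    (hnbr : ∀ i j, E.Adj i j ↔ j = i + 1 ∨ j = i - 1) (c : Fin (k + 3) → ℝ) (i : Fin (k + 3)) :
    ∑ j, E.M i j * c j = E.M i (i - 1) * c (i - 1) + 2 * c i + E.M i (i + 1) * c (i + 1) := by
  rw [Fintype.sum_eq_add_add (i - 1) i (i + 1) (by simp) i.sub_one_ne_add_one (by simp), E.diag]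
  intro j h₁ h₂ h₃
  have : E.M i j = 0 := by
    by_contra hM
    exact ((hnbr i j).1 ⟨Ne.symm h₂, hM⟩).elim h₃ h₁
  rw [this, zero_mul]

theorem sum_mul_nonpos_of_adj_iff {k : ℕ} (E : EGCM (Fin (k + 3)))
    (hnbr : ∀ i j, E.Adj i j ↔ j = i + 1 ∨ j = i - 1)
    (hprod : ∀ i, E.M i (i + 1) * E.M (i + 1) i = 1) {s : ℝ} (hs : 0 < s)
    {c : Fin (k + 3) → ℝ} (hc_nonneg : ∀ i, 0 ≤ c i)
    (hc : ∀ i, -E.M i (i + 1) * c (i + 1) = s * c i) (i : Fin (k + 3)) :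
    ∑ j, E.M i j * c j ≤ 0 := by
  have hprev : s * (E.M i (i - 1) * c (i - 1)) = -c i := by
    have h₁ := hc (i - 1)
    have h₂ := hprod (i - 1)
    rw [sub_add_cancel] at h₁ h₂
    linear_combination (-E.M i (i - 1)) * h₁ - c i * h₂
  have hsum : s * ∑ j, E.M i j * c j = -(c i * (s - 1) ^ 2) := by
    rw [E.sum_mul_eq_of_adj_iff hnbr]
    linear_combination hprev - s * hc i
  exact nonpos_of_mul_nonpos_right
    (hsum ▸ neg_nonpos.2 (mul_nonneg (hc_nonneg i) (sq_nonneg _))) hs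

end EGCM

/-- **Lemma 6.4.** An E-GCM graph whose underlying graph is a loop on `n ≥ 3` nodes and
all of whose edge amplitude products are `1` is not admissible. -/
theorem egcm_loop_not_admissible (n : ℕ) (hn : 3 ≤ n) (E : EGCM (Fin n))
    (hadj : ∀ i j : Fin n,
      E.Adj i j ↔ (j.val = (i.val + 1) % n ∨ i.val = (j.val + 1) % n))
    (hprod : ∀ i j : Fin n, E.Adj i j → E.M i j * E.M j i = 1) :
    ¬ E.Admissible := by
  obtain ⟨k, rfl⟩ : ∃ k, n = k + 3 := ⟨n - 3, by omega⟩
  have hnbr : ∀ i j, E.Adj i j ↔ j = i + 1 ∨ j = i - 1 := fun i j => by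
    rw [hadj, eq_sub_iff_add_eq, Fin.ext_iff, Fin.ext_iff, Fin.val_add, Fin.val_add, Fin.val_one,
      eq_comm (b := i.val)]
  have hsucc : ∀ i, E.Adj i (i + 1) := fun i => (hnbr i _).2 (Or.inl rfl)
  obtain ⟨s, hs, c, hc_pos, hc⟩ := exists_pos_mul_add_one_eq_mul (fun i => -E.M i (i + 1))
    fun i => neg_pos.2 ((E.offDiag_nonpos _ _ (hsucc i).1).lt_of_ne (hsucc i).2)
  exact E.not_admissible_of_pos_of_sum_mul_nonpos c hc_pos
    (E.sum_mul_nonpos_of_adj_iff hnbr (fun i => hprod _ _ (hsucc i)) hs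
      (fun i => (hc_pos i).le) hc)
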